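/- For m ≥ 1, the coefficients a_n defined by (Σ_{n≥0} ([n]_q^!)^{m-1} t^n)^{-1} = 1 - Σ_{n≥1} a_n(q) t^n are polynomials in q with nonnegative integer coefficients. -/

import Mathlib

open PowerSeries Finset

/-- The `q`-factorial `[n]_q^! = ∏_{i=1}^n (1 + q + ⋯ + q^{i-1})` as a rational polynomial. -/
noncomputable def qFact (n : ℕ) : Polynomial ℚ :=
  ∏ i ∈ Finset.range n, ∑ j ∈ Finset.range (i + 1), Polynomial.X ^ j

/-!
Write `f n = r 1 ⋯ r n` with `r j = [j]_q^{m-1}`. Comparing coefficients in `F * (1 - A) = 1`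
gives `f n = ∑_{j<n} f j * a (n - j)`, and combining this at `n + 1` and `n + 2` with
`f (n + 2) = f (n + 1) * r (n + 2)` yields
`a (n + 2) = ∑_{j ≤ n} f j * (r (n + 2) - r (j + 1)) * a (n + 1 - j)`.
Since `[j]_q` grows coefficientwise with `j`, every factor has coefficients in `ℕ`, and
induction on `n` concludes.
-/

section

variable {R : Type*} [CommRing R] {S : Subsemiring R}

theorem Subsemiring.pow_sub_pow_mem {x y : R} (hy : y ∈ S) (hxy : x - y ∈ S) (n : ℕ) :
    x ^ n - y ^ n ∈ S := by
  have hx : x ∈ S := by simpa using add_mem hxy hy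
  rw [← geom_sum₂_mul]
  exact mul_mem (sum_mem fun i _ => mul_mem (pow_mem hx _) (pow_mem hy _)) hxy

theorem PowerSeries.coeff_eq_sum_of_mul_one_sub_eq_one {F A : R⟦X⟧} (h : F * (1 - A) = 1)
    (hA : coeff 0 A = 0) {n : ℕ} (hn : n ≠ 0) :
    coeff n F = ∑ j ∈ range n, coeff j F * coeff (n - j) A := by
  have hF : F = 1 + F * A := by linear_combination h
  conv_lhs => rw [hF]
  rw [map_add, coeff_one, if_neg hn, zero_add, coeff_mul, Nat.sum_antidiagonal_eq_sum_range_succ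
    (fun i j => coeff i F * coeff j A), sum_range_succ, Nat.sub_self, hA, mul_zero, add_zero]

theorem coeff_mem_of_mk_prod_mul_one_sub_eq_one {r : ℕ → R} (hr : ∀ n, r n ∈ S)
    (hr_mono : ∀ i j, i ≤ j → r j - r i ∈ S) {A : R⟦X⟧}
    (h : mk (fun n => ∏ i ∈ range n, r (i + 1)) * (1 - A) = 1) {n : ℕ} (hn : n ≠ 0) :
    coeff n A ∈ S := by
  set f : ℕ → R := fun n => ∏ i ∈ range n, r (i + 1)
  have hf_succ (n : ℕ) : f (n + 1) = f n * r (n + 1) := prod_range_succ _ _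
  have hf_mem (n : ℕ) : f n ∈ S := prod_mem fun i _ => hr (i + 1)
  have hA : coeff 0 A = 0 := by
    simpa [f] using congrArg (coeff 0) h
  have hrec {n : ℕ} (hn : n ≠ 0) : f n = ∑ j ∈ range n, f j * coeff (n - j) A := by
    simpa using coeff_eq_sum_of_mul_one_sub_eq_one h hA hn
  induction n using Nat.strong_induction_on with
  | _ n ih =>
  match n, hn with
  | 1, _ =>
    have h1 : coeff 1 A = r 1 := by simpa [f] using (hrec one_ne_zero).symm
    exact h1 ▸ hr 1
  | n + 2, _ =>
    have key : coeff (n + 2) A =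
        ∑ j ∈ range (n + 1), f j * (r (n + 2) - r (j + 1)) * coeff (n + 1 - j) A :=
      calc coeff (n + 2) A
          = f (n + 2) - ∑ j ∈ range (n + 1), f (j + 1) * coeff (n + 1 - j) A := by
            rw [hrec (by omega), sum_range_succ']
            simp [f]
        _ = (∑ j ∈ range (n + 1), f j * coeff (n + 1 - j) A) * r (n + 2)
              - ∑ j ∈ range (n + 1), f j * r (j + 1) * coeff (n + 1 - j) A := by
            simp only [hf_succ, ← hrec (Nat.succ_ne_zero n)]
        _ = _ := by
            rw [sum_mul, ← sum_sub_distrib]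
            exact sum_congr rfl fun j _ => by ring
    rw [key]
    exact sum_mem fun j hj => mul_mem (mul_mem (hf_mem j) (hr_mono _ _ (by simp at hj; omega)))
      (ih _ (by omega) (by simp at hj; omega))

end

open Polynomial

noncomputable def qNum (n : ℕ) : ℚ[X] := ∑ j ∈ range n, Polynomial.X ^ j

theorem qNum_mem_lifts (n : ℕ) : qNum n ∈ lifts (Nat.castRingHom ℚ) :=
  sum_mem fun j _ => X_pow_mem_lifts _ j

theorem qNum_sub_qNum_mem_lifts {i j : ℕ} (hij : i ≤ j) :
    qNum j - qNum i ∈ lifts (Nat.castRingHom ℚ) := by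
  rw [qNum, qNum, ← sum_Ico_eq_sub _ hij]
  exact sum_mem fun k _ => X_pow_mem_lifts _ k

theorem qFact_pow_eq_prod (e n : ℕ) : qFact n ^ e = ∏ i ∈ range n, qNum (i + 1) ^ e :=
  (prod_pow _ _ _).symm

theorem coeffs_of_inverse_qfactorial_series_nonneg_general (m : ℕ)
    (a : ℕ → Polynomial ℚ)
    (ha : (PowerSeries.mk fun n => (qFact n) ^ (m - 1)) *
      (1 - PowerSeries.mk fun n => if n = 0 then 0 else a n) = 1) :
    ∀ n : ℕ, 1 ≤ n → ∀ k : ℕ, ∃ c : ℕ, (a n).coeff k = (c : ℚ) := by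
  intro n hn k
  simp only [qFact_pow_eq_prod] at ha
  have hmem := coeff_mem_of_mk_prod_mul_one_sub_eq_one (fun j => pow_mem (qNum_mem_lifts j) _)
    (fun i j hij => Subsemiring.pow_sub_pow_mem (qNum_mem_lifts i) (qNum_sub_qNum_mem_lifts hij) _)
    ha (n := n) (by omega)
  rw [PowerSeries.coeff_mk, if_neg (by omega)] at hmem
  obtain ⟨c, hc⟩ := (lifts_iff_coeff_lifts _).mp hmem k
  exact ⟨c, hc.symm⟩

/-- For `m ≥ 1`, the coefficients `a_n` defined by
`(Σ_{n≥0} ([n]_q^!)^{m-1} t^n)⁻¹ = 1 - Σ_{n≥1} a_n(q) t^n`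
are polynomials in `q` with nonnegative integer coefficients. -/
theorem coeffs_of_inverse_qfactorial_series_nonneg (m : ℕ) (hm : 1 ≤ m)
    (a : ℕ → Polynomial ℚ)
    (ha : (PowerSeries.mk fun n => (qFact n) ^ (m - 1)) *
      (1 - PowerSeries.mk fun n => if n = 0 then 0 else a n) = 1) :
    ∀ n : ℕ, 1 ≤ n → ∀ k : ℕ, ∃ c : ℕ, (a n).coeff k = (c : ℚ) :=
  coeffs_of_inverse_qfactorial_series_nonneg_general m a ha
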